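/- Let {P₀,…,P_m} be a symmetric Clifford system on ℝ^{2l}, and define f: ℝ^{2l} → ℝ by f(x) = |x|⁴ − 2·Σ_{i=0}^m ⟨P_ix, x⟩². If P, Q ∈ Σ anticommute (PQ + QP = 0) and W = PQ, then f is invariant under the one-parameter flow generated by W, i.e. f(exp(tW)x) = f(x) for all t ∈ ℝ and x ∈ ℝ^{2l}. -/

import Mathlib

open Matrix

/-- A symmetric Clifford system on ℝ^{2l}: real symmetric matrices with
P_i P_j + P_j P_i = 2 δ_{ij} I. -/
def IsCliffordSystem (l m : ℕ) (P : Fin (m + 1) → Matrix (Fin (2 * l)) (Fin (2 * l)) ℝ) : Prop :=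
  (∀ i, (P i)ᵀ = P i) ∧
  (∀ i j, P i * P j + P j * P i =
    if i = j then (2 : ℝ) • (1 : Matrix (Fin (2 * l)) (Fin (2 * l)) ℝ) else 0)

/-- The Cartan–Münzner polynomial of the OT-FKM construction:
f(x) = |x|⁴ − 2 ∑ ⟨Pᵢx, x⟩². -/
noncomputable def otfkm (l m : ℕ) (P : Fin (m + 1) → Matrix (Fin (2 * l)) (Fin (2 * l)) ℝ)
    (x : Fin (2 * l) → ℝ) : ℝ :=
  (x ⬝ᵥ x) ^ 2 - 2 * ∑ i, ((P i).mulVec x ⬝ᵥ x) ^ 2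

/-!
`W = PQ` satisfies `W² = -1` and `Wᵀ = -W`, so `exp (tW) = cos t + sin t W` is orthogonal and
preserves `|x|`. Conjugation by `exp (tW)` maps the Clifford sphere to itself, rotating the
`P, Q`-plane by the angle `2t` and fixing its orthocomplement. Hence the vector `(⟨Pᵢ y, y⟩)ᵢ`
for `y = exp (tW) x` arises from `(⟨Pᵢ x, x⟩)ᵢ` by a rotation in the plane of the orthonormal
coefficient vectors `a, b`, and `∑ ⟨Pᵢ x, x⟩²` is unchanged.
-/

open NormedSpace in
theorem Matrix.exp_smul_of_mul_self_eq_neg_one {n : Type*} [Fintype n] [DecidableEq n]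
    {W : Matrix n n ℝ} (hW : W * W = -1) (t : ℝ) :
    exp (t • W) = Real.cos t • 1 + Real.sin t • W := by
  let : NormedRing (Matrix n n ℝ) := Matrix.linftyOpNormedRing
  let : NormedAlgebra ℝ (Matrix n n ℝ) := Matrix.linftyOpNormedAlgebra
  -- `W` is a complex structure: the continuous algebra map `ℂ → Matrix n n ℝ`, `I ↦ W`,
  -- carries `exp (t I) = cos t + sin t I` to `exp (t W)`.
  let φ : ℂ →ₐ[ℝ] Matrix n n ℝ := Complex.liftAux W hW
  have hφI : φ Complex.I = W := Complex.liftAux_apply_I W hW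
  have hφ : Continuous φ := φ.toLinearMap.continuous_of_finiteDimensional
  calc exp (t • W) = φ (exp ((t : ℂ) * Complex.I)) := by
        rw [map_exp φ hφ, ← Complex.real_smul, _root_.map_smul, hφI]
        rfl
    _ = Real.cos t • 1 + Real.sin t • W := by
        rw [← Complex.exp_eq_exp_ℂ, Complex.exp_mul_I, ← Complex.ofReal_cos, ← Complex.ofReal_sin,
          ← Complex.real_smul, map_add, _root_.map_smul, hφI, ← Complex.coe_algebraMap,
          AlgHom.commutes, Algebra.algebraMap_eq_smul_one]

theorem Matrix.mulVec_mulVec_dotProduct_mulVec {R n : Type*} [CommSemiring R] [Fintype n]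
    (A E : Matrix n n R) (x : n → R) :
    A *ᵥ (E *ᵥ x) ⬝ᵥ E *ᵥ x = (Eᵀ * A * E) *ᵥ x ⬝ᵥ x := by
  rw [mulVec_mulVec, dotProduct_mulVec, ← mulVec_transpose, mulVec_mulVec, ← Matrix.mul_assoc]

theorem sum_add_mul_add_mul_sq {ι R : Type*} [Fintype ι] [CommRing R] {a b : ι → R}
    (ha : ∑ i, a i ^ 2 = 1) (hb : ∑ i, b i ^ 2 = 1) (hab : ∑ i, a i * b i = 0)
    (u : ι → R) (A B : R) :
    ∑ i, (u i + a i * A + b i * B) ^ 2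
      = ∑ i, u i ^ 2 + A * (A + 2 * ∑ i, a i * u i) + B * (B + 2 * ∑ i, b i * u i) := by
  have expand : ∀ i, (u i + a i * A + b i * B) ^ 2 = u i ^ 2 + 2 * A * (a i * u i)
      + 2 * B * (b i * u i) + A ^ 2 * a i ^ 2 + B ^ 2 * b i ^ 2 + 2 * A * B * (a i * b i) :=
    fun i => by ring
  simp only [expand, Finset.sum_add_distrib, ← Finset.mul_sum, ha, hb, hab]
  ring

section Rotation

variable {R : Type*} [Ring R]

theorem mul_mul_self_eq_neg_one {P Q : R} (hP : P * P = 1) (hQ : Q * Q = 1)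
    (hPQ : P * Q + Q * P = 0) : P * Q * (P * Q) = -1 := by
  rw [mul_assoc, ← mul_assoc Q, eq_neg_of_add_eq_zero_right hPQ, neg_mul, mul_neg, ← mul_assoc,
    ← mul_assoc, hP, one_mul, hQ]

variable [Algebra ℝ R]

theorem cos_sub_sin_mul_cos_add_sin {W : R} (hW : W * W = -1) (t : ℝ) :
    (Real.cos t • 1 - Real.sin t • W) * (Real.cos t • 1 + Real.sin t • W) = 1 := by
  simp only [sub_mul, mul_add, smul_mul_smul_comm, one_mul, mul_one, hW, smul_neg]
  match_scalars
  · linear_combination Real.cos_sq_add_sin_sq t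
  · ring

theorem cos_sub_sin_mul_mul_cos_add_sin {P Q X : R} (hP : P * P = 1) (hQ : Q * Q = 1)
    (hPQ : P * Q + Q * P = 0) {α β : ℝ} (hXP : X * P + P * X = (2 * α) • 1)
    (hXQ : X * Q + Q * X = (2 * β) • 1) (t : ℝ) :
    (Real.cos t • 1 - Real.sin t • (P * Q)) * X * (Real.cos t • 1 + Real.sin t • (P * Q))
      = X + (2 * Real.sin t * (Real.cos t * α - Real.sin t * β)) • Q
        - (2 * Real.sin t * (Real.sin t * α + Real.cos t * β)) • P := by
  set c := Real.cos t
  set s := Real.sin t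
  have hXW : X * (P * Q) = (2 * α) • Q - (2 * β) • P + P * Q * X := calc
    X * (P * Q) = (X * P + P * X) * Q - P * (X * Q + Q * X) + P * Q * X := by noncomm_ring
    _ = _ := by rw [hXP, hXQ, smul_mul_assoc, mul_smul_comm, one_mul, mul_one]
  have hWXW : P * Q * X * (P * Q) = (2 * α) • P + (2 * β) • Q - X := calc
    P * Q * X * (P * Q)
        = (2 * α) • (P * (Q * Q)) - (2 * β) • (P * (Q * P)) + P * Q * (P * Q) * X := by
      simp only [mul_assoc _ X, hXW, mul_add, mul_sub, mul_smul_comm, mul_assoc]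
    _ = _ := by
      rw [hQ, eq_neg_of_add_eq_zero_right hPQ, mul_neg, ← mul_assoc, hP,
        mul_mul_self_eq_neg_one hP hQ hPQ]
      simp only [mul_one, one_mul, neg_mul, smul_neg]
      abel
  calc (c • 1 - s • (P * Q)) * X * (c • 1 + s • (P * Q))
      = (c ^ 2) • X + (c * s) • (X * (P * Q) - P * Q * X)
          - (s ^ 2) • (P * Q * X * (P * Q)) := by
        simp only [sub_mul, mul_add, smul_mul_assoc, mul_smul_comm, one_mul, mul_one, mul_assoc]
        match_scalars <;> ring
    _ = _ := by
      rw [hXW, hWXW]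
      match_scalars
      · linear_combination Real.cos_sq_add_sin_sq t
      all_goals ring

end Rotation

namespace IsCliffordSystem

variable {l m : ℕ} {Pfam : Fin (m + 1) → Matrix (Fin (2 * l)) (Fin (2 * l)) ℝ}

theorem transpose_sum_smul (hP : IsCliffordSystem l m Pfam) (a : Fin (m + 1) → ℝ) :
    (∑ i, a i • Pfam i)ᵀ = ∑ i, a i • Pfam i := by
  simp only [transpose_sum, transpose_smul, hP.1]

theorem mul_sum_smul_add (hP : IsCliffordSystem l m Pfam) (b : Fin (m + 1) → ℝ)
    (i : Fin (m + 1)) :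
    Pfam i * (∑ j, b j • Pfam j) + (∑ j, b j • Pfam j) * Pfam i = (2 * b i) • 1 := by
  simp only [Finset.mul_sum, Finset.sum_mul, mul_smul_comm, smul_mul_assoc,
    ← Finset.sum_add_distrib, ← smul_add, hP.2 i, smul_ite, smul_zero, Finset.sum_ite_eq,
    Finset.mem_univ, if_true, smul_smul]
  ring_nf

theorem sum_smul_mul_add (hP : IsCliffordSystem l m Pfam) (a b : Fin (m + 1) → ℝ) :
    (∑ i, a i • Pfam i) * (∑ j, b j • Pfam j) + (∑ j, b j • Pfam j) * (∑ i, a i • Pfam i)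
      = (2 * ∑ i, a i * b i) • 1 := by
  set Y := ∑ j, b j • Pfam j
  calc (∑ i, a i • Pfam i) * Y + Y * ∑ i, a i • Pfam i
      = ∑ i, a i • (Pfam i * Y + Y * Pfam i) := by
        simp only [Finset.sum_mul, Finset.mul_sum _ _ Y, smul_mul_assoc, mul_smul_comm, smul_add,
          Finset.sum_add_distrib]
    _ = ∑ i, a i • ((2 * b i) • 1) := by simp only [Y, hP.mul_sum_smul_add]
    _ = (2 * ∑ i, a i * b i) • 1 := by
        simp only [smul_smul, ← Finset.sum_smul, Finset.mul_sum]
        ring_nf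

theorem mul_self_eq_one (hP : IsCliffordSystem l m Pfam) {a : Fin (m + 1) → ℝ}
    (ha : ∑ i, a i ^ 2 = 1) {P : Matrix (Fin (2 * l)) (Fin (2 * l)) ℝ}
    (hPdef : P = ∑ i, a i • Pfam i) : P * P = 1 := by
  have h := hP.sum_smul_mul_add a a
  rw [← hPdef, ← two_smul ℝ, Finset.sum_congr rfl fun i _ => (sq (a i)).symm, ha, mul_one] at h
  exact smul_right_injective _ two_ne_zero h

theorem sum_mul_eq_zero_of_anticomm (hP : IsCliffordSystem l m Pfam) [Nonempty (Fin (2 * l))]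
    {a b : Fin (m + 1) → ℝ} {P Q : Matrix (Fin (2 * l)) (Fin (2 * l)) ℝ}
    (hPdef : P = ∑ i, a i • Pfam i) (hQdef : Q = ∑ i, b i • Pfam i)
    (hanti : P * Q + Q * P = 0) :
    ∑ i, a i * b i = 0 := by
  rw [hPdef, hQdef, hP.sum_smul_mul_add, smul_eq_zero] at hanti
  simpa using hanti

theorem transpose_cos_add_sin (hP : IsCliffordSystem l m Pfam) {a b : Fin (m + 1) → ℝ}
    {P Q : Matrix (Fin (2 * l)) (Fin (2 * l)) ℝ} (hPdef : P = ∑ i, a i • Pfam i)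
    (hQdef : Q = ∑ i, b i • Pfam i) (hanti : P * Q + Q * P = 0) (t : ℝ) :
    (Real.cos t • 1 + Real.sin t • (P * Q))ᵀ = Real.cos t • 1 - Real.sin t • (P * Q) := by
  rw [transpose_add, transpose_smul, transpose_smul, transpose_one, transpose_mul, hPdef, hQdef,
    hP.transpose_sum_smul, hP.transpose_sum_smul, ← hPdef, ← hQdef,
    eq_neg_of_add_eq_zero_right hanti, smul_neg, sub_eq_add_neg]

theorem sum_sq_cos_sub_sin_mul_mul_cos_add_sin (hP : IsCliffordSystem l m Pfam)
    {a b : Fin (m + 1) → ℝ} (ha : ∑ i, a i ^ 2 = 1) (hb : ∑ i, b i ^ 2 = 1)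
    (hab : ∑ i, a i * b i = 0) {P Q : Matrix (Fin (2 * l)) (Fin (2 * l)) ℝ}
    (hPdef : P = ∑ i, a i • Pfam i) (hQdef : Q = ∑ i, b i • Pfam i) (hanti : P * Q + Q * P = 0)
    (t : ℝ) (x : Fin (2 * l) → ℝ) :
    ∑ i, (((Real.cos t • 1 - Real.sin t • (P * Q)) * Pfam i
        * (Real.cos t • 1 + Real.sin t • (P * Q))) *ᵥ x ⬝ᵥ x) ^ 2
      = ∑ i, (Pfam i *ᵥ x ⬝ᵥ x) ^ 2 := by
  set u : Fin (m + 1) → ℝ := fun i => Pfam i *ᵥ x ⬝ᵥ x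
  have hquad (c : Fin (m + 1) → ℝ) : (∑ i, c i • Pfam i) *ᵥ x ⬝ᵥ x = ∑ i, c i * u i := by
    simp only [sum_mulVec, sum_dotProduct, smul_mulVec, smul_dotProduct, smul_eq_mul, u]
  set p := P *ᵥ x ⬝ᵥ x
  set q := Q *ᵥ x ⬝ᵥ x
  set c := Real.cos t
  set s := Real.sin t
  have hterm (i : Fin (m + 1)) :
      ((c • 1 - s • (P * Q)) * Pfam i * (c • 1 + s • (P * Q))) *ᵥ x ⬝ᵥ x
        = u i + a i * (2 * s * (c * q - s * p)) + b i * (-2 * s * (s * q + c * p)) := by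
    rw [cos_sub_sin_mul_mul_cos_add_sin (hP.mul_self_eq_one ha hPdef)
      (hP.mul_self_eq_one hb hQdef) hanti (hPdef ▸ hP.mul_sum_smul_add a i)
      (hQdef ▸ hP.mul_sum_smul_add b i)]
    simp only [add_mulVec, sub_mulVec, smul_mulVec, add_dotProduct, sub_dotProduct,
      smul_dotProduct, smul_eq_mul, u, p, q]
    ring
  simp only [hterm]
  rw [sum_add_mul_add_mul_sq ha hb hab, ← hquad a, ← hPdef, ← hquad b, ← hQdef]
  -- `(p + 2s(cq - sp), q - 2s(sq + cp))` is `(p, q)` rotated by the angle `2t`.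
  linear_combination (4 * s ^ 2 * (p ^ 2 + q ^ 2)) * Real.cos_sq_add_sin_sq t

end IsCliffordSystem

theorem otfkm_mulVec_of_transpose_mul_self {l m : ℕ}
    (Pfam : Fin (m + 1) → Matrix (Fin (2 * l)) (Fin (2 * l)) ℝ)
    {E : Matrix (Fin (2 * l)) (Fin (2 * l)) ℝ} (hE : Eᵀ * E = 1) (x : Fin (2 * l) → ℝ) :
    otfkm l m Pfam (E *ᵥ x) = (x ⬝ᵥ x) ^ 2 - 2 * ∑ i, ((Eᵀ * Pfam i * E) *ᵥ x ⬝ᵥ x) ^ 2 := by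
  have hnorm : E *ᵥ x ⬝ᵥ E *ᵥ x = x ⬝ᵥ x := by
    simpa [hE] using mulVec_mulVec_dotProduct_mulVec 1 E x
  simp only [otfkm, hnorm, mulVec_mulVec_dotProduct_mulVec]

open NormedSpace in
/-- If P, Q in the Clifford sphere anticommute and W = PQ, then the OT-FKM polynomial is
invariant under the one-parameter flow generated by W: f(exp(tW)x) = f(x). -/
theorem otfkm_invariant_under_flow (l m : ℕ)
    (Pfam : Fin (m + 1) → Matrix (Fin (2 * l)) (Fin (2 * l)) ℝ)
    (hP : IsCliffordSystem l m Pfam)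
    (a b : Fin (m + 1) → ℝ) (ha : ∑ i, a i ^ 2 = 1) (hb : ∑ i, b i ^ 2 = 1)
    (P Q : Matrix (Fin (2 * l)) (Fin (2 * l)) ℝ)
    (hPdef : P = ∑ i, a i • Pfam i) (hQdef : Q = ∑ i, b i • Pfam i)
    (hanti : P * Q + Q * P = 0) :
    ∀ (t : ℝ) (x : Fin (2 * l) → ℝ),
      otfkm l m Pfam ((exp (t • (P * Q))).mulVec x) = otfkm l m Pfam x := by
  intro t x
  rcases isEmpty_or_nonempty (Fin (2 * l)) with _ | _
  · exact congrArg _ (Subsingleton.elim _ _)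
  have hab : ∑ i, a i * b i = 0 := hP.sum_mul_eq_zero_of_anticomm hPdef hQdef hanti
  have hW2 : P * Q * (P * Q) = -1 :=
    mul_mul_self_eq_neg_one (hP.mul_self_eq_one ha hPdef) (hP.mul_self_eq_one hb hQdef) hanti
  have hEt := hP.transpose_cos_add_sin hPdef hQdef hanti t
  rw [Matrix.exp_smul_of_mul_self_eq_neg_one hW2,
    otfkm_mulVec_of_transpose_mul_self Pfam (hEt ▸ cos_sub_sin_mul_cos_add_sin hW2 t), hEt,
    hP.sum_sq_cos_sub_sin_mul_mul_cos_add_sin ha hb hab hPdef hQdef hanti, otfkm]
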